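/- For every real β with 0 < β < 1, the two-term truncated asymptotic expression satisfies the closed-form evaluation: -(1/(β ln β)) ∫_0^∞ (1 + ln(y)/ln(β)) ln(1 + e^{-y}) dy = (1/(β ln β)) [ -π²/12 + (1/ln β)( γ π²/12 + ∑_{k=1}^∞ (-1)^{k-1} (ln k)/k² ) ], where γ is the Euler–Mascheroni constant and the integral on the left is finite. -/

import Mathlib

/-!
Expand `log (1 + e^{-y}) = ∑_{n ≥ 0} (-1)^n e^{-(n+1)y} / (n+1)` and integrate termwise
against `1` and against `log y`, using the Laplace transforms `∫_0^∞ e^{-cy} dy = 1/c` and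
`∫_0^∞ log y e^{-cy} dy = -(γ + log c)/c`; the latter follows by scaling from
`∫_0^∞ log t e^{-t} dt = Γ'(1) = -γ`. Termwise integration is legitimate because, by the
same scaling, `∫_0^∞ |log y| e^{-cy} dy ≤ (C + |log c|)/c` with
`C = ∫_0^∞ |log t| e^{-t} dt`, so the series of absolute integrals is dominated by
`∑ (C + log (n+1))/(n+1)²`. What remains is `η(2) = ζ(2)/2 = π²/12` and
`∫_0^∞ log y log (1 + e^{-y}) dy = -γ η(2) - ∑ (-1)^n log (n+1)/(n+1)²`.
-/

open Real MeasureTheory Set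

lemma hasSum_neg_one_pow_div_succ_sq :
    HasSum (fun n : ℕ => (-1 : ℝ) ^ n / ((n : ℝ) + 1) ^ 2) (π ^ 2 / 12) := by
  set z : ℕ → ℝ := fun n => 1 / ((n : ℝ) + 1) ^ 2
  have hz : HasSum z (π ^ 2 / 6) := by
    simpa [z] using (hasSum_nat_add_iff' 1).mpr hasSum_zeta_two
  have hodd : HasSum (fun k => z (2 * k + 1)) (π ^ 2 / 24) := by
    rw [show π ^ 2 / 24 = π ^ 2 / 6 / 4 by ring]
    refine (hz.div_const 4).congr_fun fun k => ?_
    simp only [z]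
    push_cast
    field_simp
    ring
  have heven : HasSum (fun k => z (2 * k)) (π ^ 2 / 8) := by
    obtain ⟨e, he⟩ := hz.summable.comp_injective (mul_right_injective₀ two_ne_zero)
    have : e + π ^ 2 / 24 = π ^ 2 / 6 := (he.even_add_odd hodd).unique hz
    rwa [show π ^ 2 / 8 = e by linarith]
  convert HasSum.even_add_odd (f := fun n : ℕ => (-1 : ℝ) ^ n / ((n : ℝ) + 1) ^ 2)
    (heven.congr_fun fun k => ?_) (hodd.neg.congr_fun fun k => ?_) using 1
  · ring
  · simp [z, pow_mul]
  · simp [z, pow_succ, pow_mul, neg_div]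

lemma summable_log_succ_div_sq :
    Summable fun n : ℕ => log ((n : ℝ) + 1) / ((n : ℝ) + 1) ^ 2 := by
  have hp : Summable fun n : ℕ => ((n : ℝ) + 1) ^ (-(3 / 2) : ℝ) := by
    simpa using (summable_nat_add_iff 1).mpr
      (summable_nat_rpow.mpr (by norm_num : -(3 / 2 : ℝ) < -1))
  refine .of_nonneg_of_le (fun n => ?_) (fun n => ?_) (hp.mul_left 2)
  · have : 0 ≤ log ((n : ℝ) + 1) := log_nonneg (by simp)
    positivity
  have hx : (0 : ℝ) < n + 1 := by positivity
  calc log ((n : ℝ) + 1) / ((n : ℝ) + 1) ^ 2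
      ≤ ((n + 1 : ℝ) ^ (1 / 2 : ℝ) / (1 / 2)) / ((n : ℝ) + 1) ^ (2 : ℝ) := by
        rw [rpow_two]; gcongr; exact log_le_rpow_div hx.le (by norm_num)
    _ = 2 * (((n : ℝ) + 1) ^ (1 / 2 : ℝ) / ((n : ℝ) + 1) ^ (2 : ℝ)) := by ring
    _ = 2 * ((n : ℝ) + 1) ^ (-(3 / 2) : ℝ) := by rw [← rpow_sub hx]; norm_num

lemma summable_one_div_succ_sq : Summable fun n : ℕ => 1 / ((n : ℝ) + 1) ^ 2 := by
  simpa using (summable_nat_add_iff 1).mpr (summable_one_div_nat_pow.mpr one_lt_two)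

lemma integral_log_mul_exp_neg :
    ∫ t in Ioi (0 : ℝ), log t * exp (-t) = -eulerMascheroniConstant := by
  have hderiv : HasDerivAt Complex.GammaIntegral (-eulerMascheroniConstant : ℂ) 1 := by
    refine Complex.hasDerivAt_Gamma_one.congr_of_eventuallyEq ?_
    filter_upwards [(isOpen_lt continuous_const Complex.continuous_re).mem_nhds
      (by norm_num : (0 : ℝ) < (1 : ℂ).re)] with s hs
    exact (Complex.Gamma_eq_integral hs).symm
  have h := hderiv.unique (Complex.hasDerivAt_GammaIntegral (by norm_num))
  simp only [sub_self, Complex.cpow_zero, one_mul] at h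
  have hreal :
      ((∫ t in Ioi (0 : ℝ), log t * exp (-t) : ℝ) : ℂ) = -eulerMascheroniConstant := by
    rw [h, ← integral_complex_ofReal]
    push_cast
    rfl
  exact_mod_cast hreal

lemma integrableOn_log_mul_exp_neg : IntegrableOn (fun t => log t * exp (-t)) (Ioi 0) := by
  have hmeas : AEStronglyMeasurable (fun t => log t * exp (-t)) := by fun_prop
  rw [← Ioc_union_Ioi_eq_Ioi zero_le_one]
  refine IntegrableOn.union ?_ ?_
  · refine (intervalIntegral.intervalIntegrable_log' (a := 0) (b := 1)).1.norm.mono'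
      hmeas.restrict ((ae_restrict_mem measurableSet_Ioc).mono fun t ht => ?_)
    rw [norm_mul, norm_of_nonneg (exp_nonneg _)]
    exact mul_le_of_le_one_right (norm_nonneg _) (exp_le_one_iff.mpr (by linarith [ht.1]))
  · have hGamma : IntegrableOn (fun t => t * exp (-t)) (Ioi 0) :=
      (GammaIntegral_convergent two_pos).congr_fun (fun t _ => by norm_num [mul_comm])
        measurableSet_Ioi
    refine (hGamma.mono_set (Ioi_subset_Ioi zero_le_one)).mono' hmeas.restrict
      ((ae_restrict_mem measurableSet_Ioi).mono fun t (ht : 1 < t) => ?_)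
    rw [norm_mul, norm_of_nonneg (exp_nonneg _), norm_of_nonneg (log_nonneg ht.le)]
    gcongr
    exact (log_le_sub_one_of_pos (by linarith)).trans (by linarith)

lemma integrableOn_log_sub_mul_exp_neg (a : ℝ) :
    IntegrableOn (fun t => (log t - a) * exp (-t)) (Ioi 0) := by
  simp only [sub_mul]
  exact integrableOn_log_mul_exp_neg.sub ((integrableOn_exp_neg_Ioi 0).const_mul a)

lemma integral_comp_mul_mul_exp_neg_mul (g : ℝ → ℝ) {c : ℝ} (hc : 0 < c) :
    ∫ y in Ioi 0, g (c * y) * exp (-(c * y)) = c⁻¹ * ∫ t in Ioi 0, g t * exp (-t) := by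
  simpa using integral_comp_mul_left_Ioi (fun t => g t * exp (-t)) 0 hc

lemma eqOn_log_mul_exp_neg_mul {c : ℝ} (hc : 0 < c) :
    EqOn (fun y => log y * exp (-(c * y)))
      (fun y => (log (c * y) - log c) * exp (-(c * y))) (Ioi 0) := fun y hy => by
  simp [log_mul hc.ne' (ne_of_gt hy)]

lemma integrableOn_log_mul_exp_neg_mul {c : ℝ} (hc : 0 < c) :
    IntegrableOn (fun y => log y * exp (-(c * y))) (Ioi 0) := by
  refine IntegrableOn.congr_fun ?_ (eqOn_log_mul_exp_neg_mul hc).symm measurableSet_Ioi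
  refine (integrableOn_Ioi_comp_mul_left_iff (fun t => (log t - log c) * exp (-t)) 0 hc).mpr ?_
  simpa using integrableOn_log_sub_mul_exp_neg (log c)

lemma integral_log_mul_exp_neg_mul {c : ℝ} (hc : 0 < c) :
    ∫ y in Ioi 0, log y * exp (-(c * y)) = -(eulerMascheroniConstant + log c) / c := by
  rw [setIntegral_congr_fun measurableSet_Ioi (eqOn_log_mul_exp_neg_mul hc),
    integral_comp_mul_mul_exp_neg_mul (fun t => log t - log c) hc]
  simp only [sub_mul]
  rw [integral_sub integrableOn_log_mul_exp_neg ((integrableOn_exp_neg_Ioi 0).const_mul _),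
    integral_const_mul, integral_log_mul_exp_neg, integral_exp_neg_Ioi_zero]
  field_simp
  ring

lemma integral_abs_log_mul_exp_neg_mul_le {c : ℝ} (hc : 0 < c) :
    ∫ y in Ioi 0, |log y| * exp (-(c * y))
      ≤ ((∫ t in Ioi 0, |log t| * exp (-t)) + |log c|) / c := by
  have hint : IntegrableOn (fun t => |log t| * exp (-t)) (Ioi 0) := by
    simpa [IntegrableOn, abs_mul] using (integrableOn_log_sub_mul_exp_neg 0).abs
  have hbound : IntegrableOn (fun t => (|log t| + |log c|) * exp (-t)) (Ioi 0) := by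
    simp only [add_mul]
    exact hint.add ((integrableOn_exp_neg_Ioi 0).const_mul _)
  calc ∫ y in Ioi 0, |log y| * exp (-(c * y))
      = ∫ y in Ioi 0, |log (c * y) - log c| * exp (-(c * y)) :=
        setIntegral_congr_fun measurableSet_Ioi fun y hy => by
          simp [log_mul hc.ne' (ne_of_gt hy)]
    _ = c⁻¹ * ∫ t in Ioi 0, |log t - log c| * exp (-t) :=
        integral_comp_mul_mul_exp_neg_mul (fun t => |log t - log c|) hc
    _ ≤ c⁻¹ * ∫ t in Ioi 0, (|log t| + |log c|) * exp (-t) := by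
        refine mul_le_mul_of_nonneg_left (setIntegral_mono_on ?_ hbound measurableSet_Ioi
          fun t _ => ?_) (by positivity)
        · simpa [IntegrableOn, abs_mul] using (integrableOn_log_sub_mul_exp_neg (log c)).abs
        · gcongr; exact abs_sub _ _
    _ = ((∫ t in Ioi 0, |log t| * exp (-t)) + |log c|) / c := by
        simp only [add_mul]
        rw [integral_add hint ((integrableOn_exp_neg_Ioi 0).const_mul _), integral_const_mul,
          integral_exp_neg_Ioi_zero]
        field_simp

lemma integral_exp_neg_mul {c : ℝ} (hc : 0 < c) : ∫ y in Ioi 0, exp (-(c * y)) = c⁻¹ := by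
  have h := integral_comp_mul_mul_exp_neg_mul (fun _ => 1) hc
  simp only [one_mul] at h
  rw [h, integral_exp_neg_Ioi_zero, mul_one]

lemma hasSum_log_one_add_exp_neg {y : ℝ} (hy : 0 < y) :
    HasSum (fun n : ℕ => (-1) ^ n / ((n : ℝ) + 1) * exp (-(((n : ℝ) + 1) * y)))
      (log (1 + exp (-y))) := by
  have habs : |-exp (-y)| < 1 := by
    rw [abs_neg, abs_exp]
    exact exp_lt_one_iff.mpr (by linarith)
  have h := (hasSum_pow_div_log_of_abs_lt_one habs).neg
  rw [sub_neg_eq_add, neg_neg] at h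
  refine h.congr_fun fun n => ?_
  rw [show -(((n : ℝ) + 1) * y) = ((n + 1 : ℕ) : ℝ) * -y by push_cast; ring, exp_nat_mul,
    neg_pow (exp (-y)), pow_succ (-1 : ℝ)]
  ring

section TermwiseIntegration

variable {w : ℝ → ℝ}

lemma integrableOn_mul_log_one_add_exp_neg (hw : IntegrableOn (fun y => w y * exp (-y)) (Ioi 0)) :
    IntegrableOn (fun y => w y * log (1 + exp (-y))) (Ioi 0) := by
  have hbdd : ∀ y, ‖exp y * log (1 + exp (-y))‖ ≤ 1 := fun y => by
    have h0 : 0 ≤ log (1 + exp (-y)) := log_nonneg (by linarith [exp_pos (-y)])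
    have h1 : log (1 + exp (-y)) ≤ exp (-y) := by
      linarith [log_le_sub_one_of_pos (by positivity : 0 < 1 + exp (-y))]
    rw [norm_of_nonneg (by positivity)]
    calc exp y * log (1 + exp (-y)) ≤ exp y * exp (-y) := by gcongr
      _ = 1 := by rw [← exp_add, add_neg_cancel, exp_zero]
  refine (hw.bdd_mul (c := 1) (by fun_prop) (ae_of_all _ hbdd)).congr (ae_of_all _ fun y => ?_)
  simp only [exp_neg]
  field_simp

lemma hasSum_integral_mul_log_one_add_exp_neg
    (hw : ∀ n : ℕ, IntegrableOn (fun y => w y * exp (-(((n : ℝ) + 1) * y))) (Ioi 0))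
    (hsum : Summable fun n : ℕ =>
      (∫ y in Ioi 0, |w y| * exp (-(((n : ℝ) + 1) * y))) / ((n : ℝ) + 1)) :
    HasSum (fun n : ℕ =>
        (-1) ^ n / ((n : ℝ) + 1) * ∫ y in Ioi 0, w y * exp (-(((n : ℝ) + 1) * y)))
      (∫ y in Ioi 0, w y * log (1 + exp (-y))) := by
  set F : ℕ → ℝ → ℝ :=
    fun n y => (-1) ^ n / ((n : ℝ) + 1) * (w y * exp (-(((n : ℝ) + 1) * y)))
  have hF_norm (n : ℕ) : ∫ y in Ioi 0, ‖F n y‖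
      = (∫ y in Ioi 0, |w y| * exp (-(((n : ℝ) + 1) * y))) / ((n : ℝ) + 1) := by
    simp only [F, norm_mul, norm_div, norm_pow, norm_neg, norm_one, one_pow, norm_eq_abs,
      abs_exp, abs_of_pos (n.cast_add_one_pos : (0 : ℝ) < n + 1)]
    rw [integral_const_mul]
    ring
  have hF := hasSum_integral_of_summable_integral_norm (fun n => (hw n).const_mul _)
    (hsum.congr fun n => (hF_norm n).symm)
  have hlim : ∫ y in Ioi 0, w y * log (1 + exp (-y)) = ∫ y in Ioi 0, ∑' n, F n y :=
    setIntegral_congr_fun measurableSet_Ioi fun y hy => by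
      simpa only [F, mul_left_comm] using
        ((hasSum_log_one_add_exp_neg hy).mul_left (w y)).tsum_eq.symm
  rw [hlim]
  simpa only [F, integral_const_mul] using hF

end TermwiseIntegration

lemma integral_log_one_add_exp_neg : ∫ y in Ioi 0, log (1 + exp (-y)) = π ^ 2 / 12 := by
  have h := hasSum_integral_mul_log_one_add_exp_neg (w := fun _ => 1)
    (fun n => by simpa only [one_mul, neg_mul] using exp_neg_integrableOn_Ioi 0 n.cast_add_one_pos)
    (summable_one_div_succ_sq.congr fun n => by
      simp only [abs_one, one_mul]
      rw [integral_exp_neg_mul n.cast_add_one_pos]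
      field_simp)
  simp only [one_mul] at h
  refine h.unique (hasSum_neg_one_pow_div_succ_sq.congr_fun fun n => ?_)
  rw [integral_exp_neg_mul n.cast_add_one_pos]
  field_simp

lemma integral_log_mul_log_one_add_exp_neg :
    ∫ y in Ioi 0, log y * log (1 + exp (-y))
      = -(eulerMascheroniConstant * π ^ 2 / 12)
        - ∑' n : ℕ, (-1) ^ n * log ((n : ℝ) + 1) / ((n : ℝ) + 1) ^ 2 := by
  have hlog (n : ℕ) : 0 ≤ log ((n : ℝ) + 1) := log_nonneg (by simp)
  have hS : Summable fun n : ℕ => (-1) ^ n * log ((n : ℝ) + 1) / ((n : ℝ) + 1) ^ 2 :=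
    summable_log_succ_div_sq.of_norm_bounded fun n => by
      simp [abs_of_nonneg (hlog n)]
  set C := ∫ t in Ioi 0, |log t| * exp (-t)
  have hmajorant : Summable fun n : ℕ => (C + log ((n : ℝ) + 1)) / ((n : ℝ) + 1) ^ 2 :=
    ((summable_one_div_succ_sq.mul_left C).add summable_log_succ_div_sq).congr fun n => by ring
  have h := hasSum_integral_mul_log_one_add_exp_neg (w := log)
    (fun n => integrableOn_log_mul_exp_neg_mul n.cast_add_one_pos)
    (hmajorant.of_nonneg_of_le
      (fun n => div_nonneg (setIntegral_nonneg measurableSet_Ioi fun _ _ => by positivity)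
        n.cast_add_one_pos.le)
      fun n => calc
        _ ≤ ((C + |log ((n : ℝ) + 1)|) / ((n : ℝ) + 1)) / ((n : ℝ) + 1) := by
          gcongr
          exact integral_abs_log_mul_exp_neg_mul_le n.cast_add_one_pos
        _ = _ := by rw [abs_of_nonneg (hlog n), div_div, ← sq])
  have hseries := (hasSum_neg_one_pow_div_succ_sq.mul_left (-eulerMascheroniConstant)).sub
    hS.hasSum
  refine (h.unique (hseries.congr_fun fun n => ?_)).trans (by ring)
  rw [integral_log_mul_exp_neg_mul n.cast_add_one_pos]
  field_simp
  ring

theorem truncated_asymptotic_log_partition_function_general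
    {β : ℝ} :
    IntegrableOn
      (fun y : ℝ => (1 + Real.log y / Real.log β) * Real.log (1 + Real.exp (-y)))
      (Set.Ioi 0) ∧
    -(1 / (β * Real.log β)) *
        ∫ y in Set.Ioi (0 : ℝ),
          (1 + Real.log y / Real.log β) * Real.log (1 + Real.exp (-y))
      = (1 / (β * Real.log β)) *
          (-(π ^ 2 / 12) +
            (1 / Real.log β) *
              (Real.eulerMascheroniConstant * π ^ 2 / 12
                + ∑' j : ℕ, (-1 : ℝ) ^ j * Real.log (j + 1) / (j + 1) ^ 2)) := by
  have hsplit : (fun y => (1 + log y / log β) * log (1 + exp (-y)))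
      = fun y => log (1 + exp (-y)) + (log β)⁻¹ * (log y * log (1 + exp (-y))) := by
    funext y
    ring
  have h1 : IntegrableOn (fun y => log (1 + exp (-y))) (Ioi 0) := by
    simpa using integrableOn_mul_log_one_add_exp_neg (w := fun _ => 1)
      (by simpa using integrableOn_exp_neg_Ioi 0)
  have h2 := (integrableOn_mul_log_one_add_exp_neg integrableOn_log_mul_exp_neg).const_mul
    (log β)⁻¹
  rw [hsplit, integral_add h1 h2, integral_const_mul, integral_log_one_add_exp_neg,
    integral_log_mul_log_one_add_exp_neg]
  exact ⟨h1.add h2, by ring⟩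

/-- For every real `β` with `0 < β < 1`, the two-term truncated asymptotic expression for
`log Z^F` satisfies the closed-form evaluation
`-(1/(β log β)) ∫_0^∞ (1 + log y / log β) log (1 + e^{-y}) dy
  = (1/(β log β)) [ -π²/12 + (1/log β)(γ π²/12 + ∑_{k ≥ 1} (-1)^{k-1} (log k)/k²) ]`,
where `γ` is the Euler–Mascheroni constant, the integral on the left being finite.
(The series is indexed here by `k = j + 1` with `j : ℕ`.) -/
theorem truncated_asymptotic_log_partition_function
    {β : ℝ} (hβ0 : 0 < β) (hβ1 : β < 1) :
    IntegrableOn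
      (fun y : ℝ => (1 + Real.log y / Real.log β) * Real.log (1 + Real.exp (-y)))
      (Set.Ioi 0) ∧
    -(1 / (β * Real.log β)) *
        ∫ y in Set.Ioi (0 : ℝ),
          (1 + Real.log y / Real.log β) * Real.log (1 + Real.exp (-y))
      = (1 / (β * Real.log β)) *
          (-(π ^ 2 / 12) +
            (1 / Real.log β) *
              (Real.eulerMascheroniConstant * π ^ 2 / 12
                + ∑' j : ℕ, (-1 : ℝ) ^ j * Real.log (j + 1) / (j + 1) ^ 2)) :=
  truncated_asymptotic_log_partition_function_general
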